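/- For every k ≥ 0 and every b_0 ∈ B: rank(b_0) = k if and only if b_0 ∈ N_k \ N_{k+1}. In particular, every nonzero element b_0 ∈ N_{k+1}^c satisfies rank(b_0) = k. -/

import Mathlib

/-!
An element `b₀` roots a Jordan chain of length `m` if and only if `b₀ ∈ N_m`. If `b₀ ∈ N_m`, then
`b_s := M_{m-s,m} b₀` is such a chain: unwinding the recursions for `M` and `E` gives
`∑_{i ≤ l} L_i ∘ M_{m-l+i,m} = S_{l+1}`, which vanishes on `N_m ⊆ N_{l+1}`. Conversely, induct on
`m`: subtracting this canonical chain from a chain of length `m + 1` leaves a chain with zero root,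
and shifting that chain down by one shows that the `L_1, …, L_m` part of its level-`m` sum lies in
`R_1 ⊕ ⋯ ⊕ R_m`. The level-`m` equation then puts `S̄_{m+1} b₀` into `R_1 ⊕ ⋯ ⊕ R_m`, which
`I - 𝒫_1 - ⋯ - 𝒫_m` annihilates, so `S_{m+1} b₀ = 0`. The statement about `rank` follows since
the `N_m` decrease.
-/

open Finset

theorem LinearMap.finsetSum_comp {R M N P ι : Type*} [Semiring R] [AddCommMonoid M]
    [AddCommMonoid N] [AddCommMonoid P] [Module R M] [Module R N] [Module R P]
    (s : Finset ι) (f : ι → N →ₗ[R] P) (g : M →ₗ[R] N) :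
    (∑ i ∈ s, f i) ∘ₗ g = ∑ i ∈ s, f i ∘ₗ g := by
  ext; simp

theorem LinearMap.comp_finsetSum {R M N P ι : Type*} [Semiring R] [AddCommMonoid M]
    [AddCommMonoid N] [AddCommMonoid P] [Module R M] [Module R N] [Module R P]
    (s : Finset ι) (f : N →ₗ[R] P) (g : ι → M →ₗ[R] N) :
    f ∘ₗ ∑ i ∈ s, g i = ∑ i ∈ s, f ∘ₗ g i := by
  ext; simp

section JordanChain

variable {𝕜 B B' : Type*} [Ring 𝕜] [AddCommGroup B] [Module 𝕜 B]
  [AddCommGroup B'] [Module 𝕜 B']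

/-- The paper's tuple `(b_{m-1}, …, b₀)` is `fun s => b s`; the values at `s ≥ m` play no role. -/
def IsJordanChain (L : ℕ → B →ₗ[𝕜] B') (m : ℕ) (b : ℕ → B) : Prop :=
  ∀ l, l + 1 ≤ m → ∑ i ∈ range (l + 1), L i (b (l - i)) = 0

def chainDefect (L : ℕ → B →ₗ[𝕜] B') (m : ℕ) (b : ℕ → B) : B' :=
  ∑ i ∈ Icc 1 m, L i (b (m - i))

variable {L : ℕ → B →ₗ[𝕜] B'} {m n : ℕ} {b c : ℕ → B}

theorem isJordanChain_zero (L : ℕ → B →ₗ[𝕜] B') (b : ℕ → B) : IsJordanChain L 0 b :=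
  fun _ hl => absurd hl (by omega)

theorem IsJordanChain.mono (h : IsJordanChain L m b) (hnm : n ≤ m) : IsJordanChain L n b :=
  fun l hl => h l (hl.trans hnm)

theorem IsJordanChain.sub (hb : IsJordanChain L m b) (hc : IsJordanChain L m c) :
    IsJordanChain L m (b - c) := fun l hl => by
  simp only [Pi.sub_apply, map_sub, sum_sub_distrib, hb l hl, hc l hl, sub_zero]

theorem sum_range_succ_eq_add_chainDefect (L : ℕ → B →ₗ[𝕜] B') (m : ℕ) (b : ℕ → B) :
    ∑ i ∈ range (m + 1), L i (b (m - i)) = L 0 (b m) + chainDefect L m b := by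
  rw [range_eq_Ico, sum_eq_sum_Ico_succ_bot (Nat.succ_pos m), zero_add, Nat.succ_eq_add_one,
    Ico_add_one_right_eq_Icc, Nat.sub_zero, chainDefect]

theorem chainDefect_sub (L : ℕ → B →ₗ[𝕜] B') (m : ℕ) (b c : ℕ → B) :
    chainDefect L m (b - c) = chainDefect L m b - chainDefect L m c := by
  simp only [chainDefect, Pi.sub_apply, map_sub, sum_sub_distrib]

theorem chainDefect_succ_of_zero (h0 : b 0 = 0) :
    chainDefect L (m + 1) b = chainDefect L m (fun s => b (s + 1)) := by
  rw [chainDefect, sum_Icc_succ_top (by omega), Nat.sub_self, h0, map_zero, add_zero]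
  refine sum_congr rfl fun i hi => ?_
  rw [show m + 1 - i = m - i + 1 by grind]

theorem IsJordanChain.shift (h0 : b 0 = 0) (h : IsJordanChain L (m + 1) b) :
    IsJordanChain L m (fun s => b (s + 1)) := fun l hl => by
  have hlevel := h (l + 1) (by omega)
  rwa [sum_range_succ_eq_add_chainDefect, chainDefect_succ_of_zero h0,
    ← sum_range_succ_eq_add_chainDefect L l (fun s => b (s + 1))] at hlevel

end JordanChain

theorem ENat.natCast_le_sSup_iff {p : ℕ → Prop} (hp : Antitone p) (h0 : p 0) (n : ℕ) :
    (n : ℕ∞) ≤ sSup {x : ℕ∞ | ∃ m : ℕ, 1 ≤ m ∧ p m ∧ x = m} ↔ p n := by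
  constructor
  · intro hn
    by_contra hpn
    have hn0 : n ≠ 0 := by
      rintro rfl
      exact hpn h0
    obtain ⟨n, rfl⟩ := Nat.exists_eq_succ_of_ne_zero hn0
    have hbound : sSup {x : ℕ∞ | ∃ m : ℕ, 1 ≤ m ∧ p m ∧ x = m} ≤ n := by
      refine sSup_le ?_
      rintro _ ⟨m, -, hpm, rfl⟩
      exact Nat.cast_le.2 (by_contra fun hmn => hpn (hp (by omega) hpm))
    exact absurd (hn.trans hbound) (by norm_cast; omega)
  · intro hpn
    rcases Nat.eq_zero_or_pos n with rfl | hn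
    · simp
    · exact le_sSup ⟨n, hn, hpn, rfl⟩

theorem ENat.sSup_eq_natCast_iff {p : ℕ → Prop} (hp : Antitone p) (h0 : p 0) (k : ℕ) :
    sSup {x : ℕ∞ | ∃ m : ℕ, 1 ≤ m ∧ p m ∧ x = m} = k ↔ p k ∧ ¬ p (k + 1) := by
  rw [← natCast_le_sSup_iff hp h0, ← natCast_le_sSup_iff hp h0, le_antisymm_iff, and_comm,
    Nat.cast_add_one, Order.add_one_le_iff_of_not_isMax (not_isMax_of_lt (ENat.natCast_lt_top k)),
    not_lt]

/-- The recursion of the paper, with `Sb i = S̄_i`, `Nc i = N_i^c`, `Rc i = R_i^c`, `P i = 𝒫_i`,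
and `T i = S_i⁻¹ ∘ 𝒫_i : B̄ → N_i^c`. -/
structure JordanRecursion (𝕜 B B' : Type*) [Ring 𝕜] [AddCommGroup B] [Module 𝕜 B]
    [AddCommGroup B'] [Module 𝕜 B'] where
  L : ℕ → B →ₗ[𝕜] B'
  Sb : ℕ → B →ₗ[𝕜] B'
  S : ℕ → B →ₗ[𝕜] B'
  N : ℕ → Submodule 𝕜 B
  Nc : ℕ → Submodule 𝕜 B
  R : ℕ → Submodule 𝕜 B'
  Rc : ℕ → Submodule 𝕜 B'
  P : ℕ → B' →ₗ[𝕜] B'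
  T : ℕ → B' →ₗ[𝕜] B
  E : ℕ → ℕ → B →ₗ[𝕜] B
  M : ℕ → ℕ → B →ₗ[𝕜] B
  N_zero : N 0 = ⊤
  Sb_one : Sb 1 = L 0
  Sb_succ : ∀ k, 1 ≤ k → Sb (k + 1) = ∑ i ∈ Icc 1 k, (L i).comp (M i k)
  S_succ : ∀ k, S (k + 1) = Sb (k + 1) - ∑ i ∈ Icc 1 k, (P i).comp (Sb (k + 1))
  N_succ : ∀ k, N (k + 1) = LinearMap.ker (S (k + 1)) ⊓ N k
  R_succ : ∀ k, R (k + 1) = Submodule.map (S (k + 1)) (N k)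
  Nc_sup_N : ∀ k, Nc (k + 1) ⊔ N (k + 1) = N k
  R_sup_Rc : ∀ k, R (k + 1) ⊔ Rc (k + 1) = Rc k
  range_P_le : ∀ i, 1 ≤ i → LinearMap.range (P i) ≤ R i
  P_apply_of_mem_R : ∀ i, 1 ≤ i → ∀ y ∈ R i, P i y = y
  P_apply_of_mem_Rc : ∀ i, 1 ≤ i → ∀ y ∈ Rc i, P i y = 0
  P_apply_of_mem_R_of_lt : ∀ i j, 1 ≤ j → j < i → ∀ y ∈ R j, P i y = 0
  T_mem_Nc : ∀ i, 1 ≤ i → ∀ y, T i y ∈ Nc i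
  S_apply_T : ∀ i, 1 ≤ i → ∀ y, S i (T i y) = P i y
  E_self : ∀ k, E (k + 1) (k + 1) = LinearMap.id
  E_succ : ∀ k i, 1 ≤ i → i ≤ k →
    E i (k + 1) = -((T i).comp (∑ v ∈ Icc (i + 1) (k + 1), (Sb v).comp (E v (k + 1))))
  M_one_one : M 1 1 = LinearMap.id
  M_one_succ : ∀ k, 1 ≤ k → M 1 (k + 1) = E 1 (k + 1)
  M_succ : ∀ k a, 2 ≤ a → a ≤ k + 1 →
    M a (k + 1) = ∑ b ∈ Icc (a - 1) k, (M (a - 1) b).comp (E (b + 1) (k + 1))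

namespace JordanRecursion

variable {𝕜 B B' : Type*} [Ring 𝕜] [AddCommGroup B] [Module 𝕜 B]
  [AddCommGroup B'] [Module 𝕜 B'] (D : JordanRecursion 𝕜 B B')

def Q (k : ℕ) : B' →ₗ[𝕜] B' := LinearMap.id - ∑ i ∈ Icc 1 k, D.P i

def Rsup (k : ℕ) : Submodule 𝕜 B' := ⨆ i ∈ Icc 1 k, D.R i

theorem N_antitone : Antitone D.N :=
  antitone_nat_of_succ_le fun k => D.N_succ k ▸ inf_le_right

theorem Nc_le_N (k : ℕ) : D.Nc (k + 1) ≤ D.N k :=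
  D.Nc_sup_N k ▸ le_sup_left

theorem S_apply_eq_zero {k : ℕ} {x : B} (hx : x ∈ D.N (k + 1)) : D.S (k + 1) x = 0 := by
  rw [D.N_succ] at hx
  exact hx.1

theorem S_one : D.S 1 = D.L 0 := by
  simp [D.S_succ 0, D.Sb_one]

theorem S_succ_mem_R_succ {k : ℕ} {x : B} (hx : x ∈ D.N k) : D.S (k + 1) x ∈ D.R (k + 1) :=
  D.R_succ k ▸ Submodule.mem_map_of_mem hx

theorem L_zero_mem_R_one (x : B) : D.L 0 x ∈ D.R 1 :=
  D.S_one ▸ D.S_succ_mem_R_succ (D.N_zero ▸ Submodule.mem_top)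

theorem R_le_Rc {u w : ℕ} (h : w < u) : D.R u ≤ D.Rc w := by
  obtain ⟨u, rfl⟩ : ∃ v, u = v + 1 := ⟨u - 1, by omega⟩
  have hRc : Antitone D.Rc := antitone_nat_of_succ_le fun k => D.R_sup_Rc k ▸ le_sup_right
  exact (D.R_sup_Rc u ▸ le_sup_left).trans (hRc (Nat.le_of_lt_succ h))

theorem Q_zero : D.Q 0 = LinearMap.id := by
  simp [Q]

theorem Q_succ (k : ℕ) : D.Q (k + 1) = D.Q k - D.P (k + 1) := by
  rw [Q, Q, sum_Icc_succ_top (by omega), sub_add_eq_sub_sub]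

theorem Q_comp_Sb (k : ℕ) : D.Q k ∘ₗ D.Sb (k + 1) = D.S (k + 1) := by
  rw [Q, D.S_succ, LinearMap.sub_comp, LinearMap.id_comp, LinearMap.finsetSum_comp]

theorem R_le_ker_Q {u k : ℕ} (hu : 1 ≤ u) (huk : u ≤ k) : D.R u ≤ LinearMap.ker (D.Q k) := by
  intro y hy
  have hproj : ∑ w ∈ Icc 1 k, D.P w y = y := by
    rw [sum_eq_single_of_mem u (mem_Icc.2 ⟨hu, huk⟩)]
    · exact D.P_apply_of_mem_R u hu y hy
    · intro w hw hwu
      rcases lt_or_gt_of_ne hwu with hlt | hgt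
      · exact D.P_apply_of_mem_Rc w (mem_Icc.1 hw).1 y (D.R_le_Rc hlt hy)
      · exact D.P_apply_of_mem_R_of_lt w u hu hgt y hy
  simp [Q, hproj]

theorem R_le_Rsup {u k : ℕ} (hu : 1 ≤ u) (huk : u ≤ k) : D.R u ≤ D.Rsup k :=
  le_iSup₂_of_le (f := fun i (_ : i ∈ Icc 1 k) => D.R i) u (mem_Icc.2 ⟨hu, huk⟩) le_rfl

theorem Rsup_le_ker_Q (k : ℕ) : D.Rsup k ≤ LinearMap.ker (D.Q k) :=
  iSup₂_le fun _ hu => D.R_le_ker_Q (mem_Icc.1 hu).1 (mem_Icc.1 hu).2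

theorem Rsup_le_succ (k : ℕ) : D.Rsup k ≤ D.Rsup (k + 1) :=
  iSup₂_le fun _ hu => D.R_le_Rsup (mem_Icc.1 hu).1 (by grind)

theorem sum_P_mem_Rsup (k : ℕ) (y : B') : ∑ u ∈ Icc 1 k, D.P u y ∈ D.Rsup k :=
  Submodule.sum_mem _ fun u hu => D.R_le_Rsup (mem_Icc.1 hu).1 (mem_Icc.1 hu).2
    (D.range_P_le u (mem_Icc.1 hu).1 (LinearMap.mem_range_self _ _))

theorem Sb_succ_mem_Rsup_succ {k : ℕ} {x : B} (hx : x ∈ D.N k) :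
    D.Sb (k + 1) x ∈ D.Rsup (k + 1) := by
  have hsplit : D.Sb (k + 1) x = D.S (k + 1) x + ∑ u ∈ Icc 1 k, D.P u (D.Sb (k + 1) x) := by
    rw [← D.Q_comp_Sb]
    simp [Q]
  rw [hsplit]
  exact add_mem (D.R_le_Rsup le_add_self le_rfl (D.S_succ_mem_R_succ hx))
    (D.Rsup_le_succ k (D.sum_P_mem_Rsup k _))

theorem S_eq_zero_of_Sb_mem_Rsup {k : ℕ} {x : B} (hx : D.Sb (k + 1) x ∈ D.Rsup k) :
    D.S (k + 1) x = 0 := by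
  rw [← D.Q_comp_Sb]
  exact D.Rsup_le_ker_Q k hx

theorem S_comp_T (i : ℕ) : D.S (i + 1) ∘ₗ D.T (i + 1) = D.P (i + 1) :=
  LinearMap.ext (D.S_apply_T (i + 1) (by omega))

theorem E_succ_eq_sum_Ico {i l : ℕ} (h : i < l) :
    D.E (i + 1) (l + 1) =
      -(D.T (i + 1) ∘ₗ ∑ b ∈ Ico (i + 1) (l + 1), D.Sb (b + 1) ∘ₗ D.E (b + 1) (l + 1)) := by
  rw [D.E_succ l (i + 1) (by omega) h, ← Ico_add_one_right_eq_Icc,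
    ← sum_Ico_add' (fun v => D.Sb v ∘ₗ D.E v (l + 1)) (i + 1) (l + 1) 1]

theorem E_mem_Nc {i l : ℕ} (h : i < l) (x : B) : D.E (i + 1) (l + 1) x ∈ D.Nc (i + 1) := by
  rw [D.E_succ_eq_sum_Ico h]
  exact neg_mem (D.T_mem_Nc _ (by omega) _)

theorem Q_comp_sum_Sb_comp_E {i l : ℕ} (hi : i ≤ l) :
    D.Q i ∘ₗ ∑ b ∈ Ico i (l + 1), D.Sb (b + 1) ∘ₗ D.E (b + 1) (l + 1) = D.S (l + 1) := by
  induction hi using Nat.decreasingInduction with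
  | self => simp [D.E_self, D.Q_comp_Sb]
  | of_succ i hil ih =>
    -- one term of the tail is traded for one projection: `Q_i ∘ S̄_{i+1} ∘ T_{i+1} = 𝒫_{i+1}`
    have hQST : D.Q i ∘ₗ D.Sb (i + 1) ∘ₗ D.T (i + 1) = D.P (i + 1) := by
      rw [← LinearMap.comp_assoc, D.Q_comp_Sb, D.S_comp_T]
    rw [sum_eq_sum_Ico_succ_bot (by omega), D.E_succ_eq_sum_Ico hil, ← ih, D.Q_succ,
      LinearMap.comp_add, LinearMap.comp_neg, LinearMap.comp_neg, LinearMap.sub_comp, ← hQST]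
    simp only [LinearMap.comp_assoc]
    abel

theorem sum_Sb_comp_E (l : ℕ) :
    ∑ b ∈ range (l + 1), D.Sb (b + 1) ∘ₗ D.E (b + 1) (l + 1) = D.S (l + 1) := by
  have h := D.Q_comp_sum_Sb_comp_E (Nat.zero_le l)
  rwa [D.Q_zero, LinearMap.id_comp, ← range_eq_Ico] at h

theorem sum_S_comp_E (j l : ℕ) :
    ∑ b ∈ range (l + 1), D.S (b + 1) ∘ₗ D.E (b + j + 2) (l + j + 2) = D.S (l + 1) := by
  rw [sum_range_succ, D.E_self, LinearMap.comp_id, add_eq_right]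
  refine sum_eq_zero fun b hb => LinearMap.ext fun x => D.S_apply_eq_zero ?_
  have hE := D.Nc_le_N _ (D.E_mem_Nc (by grind : b + j + 1 < l + j + 1) x)
  exact D.N_antitone (by omega) hE

theorem M_one {k : ℕ} (hk : 1 ≤ k) : D.M 1 k = D.E 1 k := by
  obtain ⟨k, rfl⟩ : ∃ k', k = k' + 1 := ⟨k - 1, by omega⟩
  rcases Nat.eq_zero_or_pos k with rfl | hk
  · rw [D.M_one_one, D.E_self 0]
  · exact D.M_one_succ k hk

theorem M_self {m : ℕ} (hm : 1 ≤ m) : D.M m m = LinearMap.id := by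
  induction m, hm using Nat.le_induction with
  | base => exact D.M_one_one
  | succ m hm ih =>
    rw [D.M_succ m (m + 1) (by omega) le_rfl, Nat.add_sub_cancel, Icc_self, sum_singleton, ih,
      D.E_self, LinearMap.id_comp]

theorem M_succ_eq_sum_Ico {i j l : ℕ} (hij : 1 ≤ i + j) (hil : i ≤ l) :
    D.M (i + j + 1) (l + j + 1) =
      ∑ b ∈ Ico i (l + 1), D.M (i + j) (b + j) ∘ₗ D.E (b + j + 1) (l + j + 1) := by
  rw [D.M_succ (l + j) (i + j + 1) (by omega) (by omega), Nat.add_sub_cancel,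
    ← Ico_add_one_right_eq_Icc, sum_Ico_add' (fun b => D.M (i + j) b ∘ₗ D.E (b + 1) (l + j + 1)),
    Nat.add_right_comm l 1 j]

theorem sum_L_comp_M_succ (l : ℕ) :
    ∑ i ∈ range (l + 1), D.L i ∘ₗ D.M (i + 1) (l + 1) = D.S (l + 1) := by
  have hM : ∀ i ∈ Ico 1 (l + 1), D.M (i + 1) (l + 1) =
      ∑ b ∈ Ico i (l + 1), D.M i b ∘ₗ D.E (b + 1) (l + 1) := fun i hi =>
    D.M_succ_eq_sum_Ico (j := 0) (by grind) (by grind)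
  have hSb : ∀ b ∈ Ico 1 (l + 1), ∑ i ∈ Ico 1 (b + 1), D.L i ∘ₗ D.M i b = D.Sb (b + 1) :=
    fun b hb => by rw [D.Sb_succ b (by grind), Ico_add_one_right_eq_Icc]
  calc ∑ i ∈ range (l + 1), D.L i ∘ₗ D.M (i + 1) (l + 1)
      = D.Sb 1 ∘ₗ D.E 1 (l + 1) +
          ∑ i ∈ Ico 1 (l + 1), ∑ b ∈ Ico i (l + 1), D.L i ∘ₗ D.M i b ∘ₗ D.E (b + 1) (l + 1) := by
        rw [range_eq_Ico, sum_eq_sum_Ico_succ_bot (by omega), D.M_one (by omega), D.Sb_one,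
          sum_congr rfl fun i hi => by rw [hM i hi, LinearMap.comp_finsetSum]]
    _ = ∑ b ∈ range (l + 1), D.Sb (b + 1) ∘ₗ D.E (b + 1) (l + 1) := by
        rw [range_eq_Ico, sum_eq_sum_Ico_succ_bot (Nat.succ_pos l), zero_add, sum_Ico_Ico_comm]
        refine congrArg _ (sum_congr rfl fun b hb => ?_)
        rw [← hSb b hb, LinearMap.finsetSum_comp]
        rfl
    _ = D.S (l + 1) := D.sum_Sb_comp_E l

theorem sum_L_comp_M (j l : ℕ) :
    ∑ i ∈ range (l + 1), D.L i ∘ₗ D.M (i + j + 1) (l + j + 1) = D.S (l + 1) := by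
  induction j generalizing l with
  | zero => exact D.sum_L_comp_M_succ l
  | succ j ih =>
    calc ∑ i ∈ range (l + 1), D.L i ∘ₗ D.M (i + (j + 1) + 1) (l + (j + 1) + 1)
        = ∑ i ∈ range (l + 1), ∑ b ∈ Ico i (l + 1),
            D.L i ∘ₗ D.M (i + j + 1) (b + j + 1) ∘ₗ D.E (b + j + 2) (l + j + 2) :=
          sum_congr rfl fun i hi => by
            rw [D.M_succ_eq_sum_Ico (by omega) (by grind), LinearMap.comp_finsetSum]
            rfl
      _ = ∑ b ∈ range (l + 1), (∑ i ∈ range (b + 1), D.L i ∘ₗ D.M (i + j + 1) (b + j + 1)) ∘ₗ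
            D.E (b + j + 2) (l + j + 2) := by
          simp only [range_eq_Ico, sum_Ico_Ico_comm, LinearMap.finsetSum_comp]
          rfl
      _ = D.S (l + 1) := by
          simp only [ih, D.sum_S_comp_E]

def rootChain (m : ℕ) (x : B) : ℕ → B := fun s => D.M (m - s) m x

theorem rootChain_zero {m : ℕ} (hm : 1 ≤ m) (x : B) : D.rootChain m x 0 = x := by
  simp [rootChain, D.M_self hm]

theorem isJordanChain_rootChain {m : ℕ} {x : B} (hx : x ∈ D.N m) :
    IsJordanChain D.L m (D.rootChain m x) := fun l hl => by
  obtain ⟨j, rfl⟩ : ∃ j, m = l + j + 1 := ⟨m - l - 1, by omega⟩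
  calc ∑ i ∈ range (l + 1), D.L i (D.M (l + j + 1 - (l - i)) (l + j + 1) x)
      = (∑ i ∈ range (l + 1), D.L i ∘ₗ D.M (i + j + 1) (l + j + 1)) x := by
        rw [LinearMap.sum_apply]
        exact sum_congr rfl fun i hi => by rw [show l + j + 1 - (l - i) = i + j + 1 by grind]; rfl
    _ = 0 := by rw [D.sum_L_comp_M]; exact D.S_apply_eq_zero (D.N_antitone (by omega) hx)

theorem chainDefect_rootChain {m : ℕ} (hm : 1 ≤ m) (x : B) :
    chainDefect D.L m (D.rootChain m x) = D.Sb (m + 1) x := by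
  rw [D.Sb_succ m hm, LinearMap.sum_apply, chainDefect]
  exact sum_congr rfl fun i hi => by rw [rootChain, show m - (m - i) = i by grind]; rfl

theorem exists_isJordanChain_of_mem_N {m : ℕ} {x : B} (hx : x ∈ D.N m) :
    ∃ b, b 0 = x ∧ IsJordanChain D.L m b := by
  rcases Nat.eq_zero_or_pos m with rfl | hm
  · exact ⟨fun _ => x, rfl, isJordanChain_zero _ _⟩
  · exact ⟨D.rootChain m x, D.rootChain_zero hm x, D.isJordanChain_rootChain hx⟩

theorem chainDefect_sub_Sb_mem_Rsup {m : ℕ} (hm : 1 ≤ m) {b : ℕ → B}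
    (hb : IsJordanChain D.L m b) (hb0 : b 0 ∈ D.N m)
    (hdefect : ∀ c, c 0 = 0 → IsJordanChain D.L m c → chainDefect D.L m c ∈ D.Rsup m) :
    chainDefect D.L m b - D.Sb (m + 1) (b 0) ∈ D.Rsup m := by
  rw [← D.chainDefect_rootChain hm, ← chainDefect_sub]
  exact hdefect _ (by simp [D.rootChain_zero hm]) (hb.sub (D.isJordanChain_rootChain hb0))

theorem mem_N_and_chainDefect_mem_Rsup (m : ℕ) :
    (∀ b, IsJordanChain D.L m b → b 0 ∈ D.N m) ∧
      ∀ c, c 0 = 0 → IsJordanChain D.L m c → chainDefect D.L m c ∈ D.Rsup m := by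
  induction m with
  | zero => exact ⟨fun b _ => D.N_zero ▸ Submodule.mem_top, fun c _ _ => by simp [chainDefect]⟩
  | succ m ih =>
    refine ⟨fun b hb => ?_, fun c hc0 hc => ?_⟩
    · have hbm := ih.1 b (hb.mono (by omega))
      have hSb : D.Sb (m + 1) (b 0) ∈ D.Rsup m := by
        have hlevel := hb m le_rfl
        rw [sum_range_succ_eq_add_chainDefect] at hlevel
        rcases Nat.eq_zero_or_pos m with rfl | hm
        · simp only [chainDefect, zero_lt_one, Icc_eq_empty_of_lt, sum_empty,
            add_zero] at hlevel
          simp [D.Sb_one, hlevel]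
        · have hSb_eq : D.Sb (m + 1) (b 0) =
              -(D.L 0 (b m) + (chainDefect D.L m b - D.Sb (m + 1) (b 0))) := by
            rw [← add_sub_assoc, hlevel, zero_sub, neg_neg]
          rw [hSb_eq]
          exact neg_mem (add_mem (D.R_le_Rsup le_rfl hm (D.L_zero_mem_R_one (b m)))
            (D.chainDefect_sub_Sb_mem_Rsup hm (hb.mono (by omega)) hbm ih.2))
      rw [D.N_succ]
      exact ⟨D.S_eq_zero_of_Sb_mem_Rsup hSb, hbm⟩
    · rw [chainDefect_succ_of_zero hc0]
      rcases Nat.eq_zero_or_pos m with rfl | hm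
      · simp [chainDefect]
      · have hd := hc.shift hc0
        have hd0 := ih.1 _ hd
        rw [← sub_add_cancel (chainDefect D.L m _) (D.Sb (m + 1) (c (0 + 1)))]
        exact add_mem (D.Rsup_le_succ m (D.chainDefect_sub_Sb_mem_Rsup hm hd hd0 ih.2))
          (D.Sb_succ_mem_Rsup_succ hd0)

theorem exists_isJordanChain_iff (x : B) (m : ℕ) :
    (∃ b, b 0 = x ∧ IsJordanChain D.L m b) ↔ x ∈ D.N m :=
  ⟨fun ⟨b, hb0, hb⟩ => hb0 ▸ (D.mem_N_and_chainDefect_mem_Rsup m).1 b hb,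
    D.exists_isJordanChain_of_mem_N⟩

end JordanRecursion

theorem stmt_6_general
    {𝕂 : Type*} [RCLike 𝕂]
    {B B' : Type*} [AddCommGroup B] [Module 𝕂 B]
    [AddCommGroup B'] [Module 𝕂 B']
    (L : ℕ → B →ₗ[𝕂] B')
    (Sb S : ℕ → B →ₗ[𝕂] B')
    (N Nc : ℕ → Submodule 𝕂 B)
    (R Rc : ℕ → Submodule 𝕂 B')
    (P : ℕ → B' →ₗ[𝕂] B')
    (T : ℕ → B' →ₗ[𝕂] B)
    (E M : ℕ → ℕ → B →ₗ[𝕂] B)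
    (hN0 : N 0 = ⊤)
    (hSb1 : Sb 1 = L 0)
    (hSbrec : ∀ k, 1 ≤ k → Sb (k + 1) = ∑ i ∈ Finset.Icc 1 k, (L i).comp (M i k))
    (hSdef : ∀ k, S (k + 1) = Sb (k + 1) - ∑ i ∈ Finset.Icc 1 k, (P i).comp (Sb (k + 1)))
    (hNdef : ∀ k, N (k + 1) = LinearMap.ker (S (k + 1)) ⊓ N k)
    (hRdef : ∀ k, R (k + 1) = Submodule.map (S (k + 1)) (N k))
    (hNcompl : ∀ k, Disjoint (Nc (k + 1)) (N (k + 1)) ∧ Nc (k + 1) ⊔ N (k + 1) = N k)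
    (hRcompl : ∀ k, Disjoint (R (k + 1)) (Rc (k + 1)) ∧ R (k + 1) ⊔ Rc (k + 1) = Rc k)
    (hPrange : ∀ i, 1 ≤ i → LinearMap.range (P i) ≤ R i)
    (hPid : ∀ i, 1 ≤ i → ∀ y ∈ R i, P i y = y)
    (hPzeroRc : ∀ i, 1 ≤ i → ∀ y ∈ Rc i, P i y = 0)
    (hPzeroR : ∀ i j, 1 ≤ j → j < i → ∀ y ∈ R j, P i y = 0)
    (hTrange : ∀ i, 1 ≤ i → ∀ y, T i y ∈ Nc i)
    (hST : ∀ i, 1 ≤ i → ∀ y, S i (T i y) = P i y)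
    (hEdiag : ∀ k, E (k + 1) (k + 1) = LinearMap.id)
    (hErec : ∀ k i, 1 ≤ i → i ≤ k →
      E i (k + 1) = -((T i).comp (∑ v ∈ Finset.Icc (i + 1) (k + 1), (Sb v).comp (E v (k + 1)))))
    (hM11 : M 1 1 = LinearMap.id)
    (hM1 : ∀ k, 1 ≤ k → M 1 (k + 1) = E 1 (k + 1))
    (hMrec : ∀ k a, 2 ≤ a → a ≤ k + 1 →
      M a (k + 1) = ∑ b ∈ Finset.Icc (a - 1) k, (M (a - 1) b).comp (E (b + 1) (k + 1)))
    (rank : B → ℕ∞)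
    (hrank : ∀ b0 : B, rank b0 = sSup {x : ℕ∞ | ∃ m : ℕ, 1 ≤ m ∧
      (∃ b : ℕ → B, b 0 = b0 ∧
        ∀ l, l + 1 ≤ m → ∑ i ∈ Finset.range (l + 1), L i (b (l - i)) = 0) ∧ x = (m : ℕ∞)})
    :
    ∀ k : ℕ,
      (∀ b0 : B, rank b0 = (k : ℕ∞) ↔ (b0 ∈ N k ∧ b0 ∉ N (k + 1))) ∧
      (∀ b0 ∈ Nc (k + 1), b0 ≠ 0 → rank b0 = (k : ℕ∞)) := by
  let D : JordanRecursion 𝕂 B B' :=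
    { L, Sb, S, N, Nc, R, Rc, P, T, E, M
      N_zero := hN0, Sb_one := hSb1, Sb_succ := hSbrec, S_succ := hSdef, N_succ := hNdef,
      R_succ := hRdef, Nc_sup_N := fun k => (hNcompl k).2, R_sup_Rc := fun k => (hRcompl k).2,
      range_P_le := hPrange, P_apply_of_mem_R := hPid, P_apply_of_mem_Rc := hPzeroRc,
      P_apply_of_mem_R_of_lt := hPzeroR, T_mem_Nc := hTrange, S_apply_T := hST, E_self := hEdiag,
      E_succ := hErec, M_one_one := hM11, M_one_succ := hM1, M_succ := hMrec }
  have hrank_iff (k : ℕ) (b0 : B) : rank b0 = k ↔ b0 ∈ N k ∧ b0 ∉ N (k + 1) := by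
    have hchain : ∀ m, (∃ b : ℕ → B, b 0 = b0 ∧ IsJordanChain L m b) ↔ b0 ∈ N m :=
      D.exists_isJordanChain_iff b0
    rw [hrank, ← hchain, ← hchain]
    exact ENat.sSup_eq_natCast_iff (p := fun m => ∃ b : ℕ → B, b 0 = b0 ∧ IsJordanChain L m b)
      (fun _ _ hnm ⟨b, hb0, hb⟩ => ⟨b, hb0, hb.mono hnm⟩)
      ⟨fun _ => b0, rfl, isJordanChain_zero L _⟩ k
  refine fun k => ⟨hrank_iff k, fun b0 hb0 hne => ?_⟩
  refine (hrank_iff k b0).2 ⟨D.Nc_le_N k hb0, fun hN => hne ?_⟩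
  exact Submodule.disjoint_def.1 (hNcompl k).1 b0 hb0 hN

theorem stmt_6
    {𝕂 : Type*} [RCLike 𝕂]
    {B B' : Type*} [AddCommGroup B] [Module 𝕂 B]
    [AddCommGroup B'] [Module 𝕂 B']
    (L : ℕ → B →ₗ[𝕂] B')
    (Sb S : ℕ → B →ₗ[𝕂] B')
    (N Nc : ℕ → Submodule 𝕂 B)
    (R Rc : ℕ → Submodule 𝕂 B')
    (P : ℕ → B' →ₗ[𝕂] B')
    (T : ℕ → B' →ₗ[𝕂] B)
    (E M : ℕ → ℕ → B →ₗ[𝕂] B)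
    (hL : ∃ i, L i ≠ 0)
    (hN0 : N 0 = ⊤) (hRc0 : Rc 0 = ⊤)
    (hSb1 : Sb 1 = L 0)
    (hSbrec : ∀ k, 1 ≤ k → Sb (k + 1) = ∑ i ∈ Finset.Icc 1 k, (L i).comp (M i k))
    (hSdef : ∀ k, S (k + 1) = Sb (k + 1) - ∑ i ∈ Finset.Icc 1 k, (P i).comp (Sb (k + 1)))
    (hNdef : ∀ k, N (k + 1) = LinearMap.ker (S (k + 1)) ⊓ N k)
    (hRdef : ∀ k, R (k + 1) = Submodule.map (S (k + 1)) (N k))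
    (hNcompl : ∀ k, Disjoint (Nc (k + 1)) (N (k + 1)) ∧ Nc (k + 1) ⊔ N (k + 1) = N k)
    (hRcompl : ∀ k, Disjoint (R (k + 1)) (Rc (k + 1)) ∧ R (k + 1) ⊔ Rc (k + 1) = Rc k)
    (hPrange : ∀ i, 1 ≤ i → LinearMap.range (P i) ≤ R i)
    (hPid : ∀ i, 1 ≤ i → ∀ y ∈ R i, P i y = y)
    (hPzeroRc : ∀ i, 1 ≤ i → ∀ y ∈ Rc i, P i y = 0)
    (hPzeroR : ∀ i j, 1 ≤ j → j < i → ∀ y ∈ R j, P i y = 0)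
    (hTrange : ∀ i, 1 ≤ i → ∀ y, T i y ∈ Nc i)
    (hTS : ∀ i, 1 ≤ i → ∀ x ∈ Nc i, T i (S i x) = x)
    (hST : ∀ i, 1 ≤ i → ∀ y, S i (T i y) = P i y)
    (hE11 : E 1 1 = LinearMap.id)
    (hEdiag : ∀ k, E (k + 1) (k + 1) = LinearMap.id)
    (hErec : ∀ k i, 1 ≤ i → i ≤ k →
      E i (k + 1) = -((T i).comp (∑ v ∈ Finset.Icc (i + 1) (k + 1), (Sb v).comp (E v (k + 1)))))
    (hM11 : M 1 1 = LinearMap.id)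
    (hM1 : ∀ k, 1 ≤ k → M 1 (k + 1) = E 1 (k + 1))
    (hMrec : ∀ k a, 2 ≤ a → a ≤ k + 1 →
      M a (k + 1) = ∑ b ∈ Finset.Icc (a - 1) k, (M (a - 1) b).comp (E (b + 1) (k + 1)))
    (rank : B → ℕ∞)
    (hrank : ∀ b0 : B, rank b0 = sSup {x : ℕ∞ | ∃ m : ℕ, 1 ≤ m ∧
      (∃ b : ℕ → B, b 0 = b0 ∧
        ∀ l, l + 1 ≤ m → ∑ i ∈ Finset.range (l + 1), L i (b (l - i)) = 0) ∧ x = (m : ℕ∞)})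
    :
    ∀ k : ℕ,
      (∀ b0 : B, rank b0 = (k : ℕ∞) ↔ (b0 ∈ N k ∧ b0 ∉ N (k + 1))) ∧
      (∀ b0 ∈ Nc (k + 1), b0 ≠ 0 → rank b0 = (k : ℕ∞)) :=
  stmt_6_general L Sb S N Nc R Rc P T E M hN0 hSb1 hSbrec hSdef hNdef hRdef hNcompl hRcompl hPrange
    hPid hPzeroRc hPzeroR hTrange hST hEdiag hErec hM11 hM1 hMrec rank hrank
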